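/- arXiv:1212.4395 — 11 statements merged into one kernel-verified Lean document; each statement's English description precedes it below -/
import Mathlib

section
/- Let n ≥ 2 be a positive integer, let D be a topological space, and suppose there exists a continuous bijection G : D → S^{n-1}, where S^{n-1} is the unit sphere of ℝⁿ. Then there exists an n-dimensional linear subspace V of the space C(D, ℝ) of continuous real-valued functions on D such that every nonzero f ∈ V attains its maximum at exactly one point of D (i.e., there exists a unique x₀ ∈ D with f(x) ≤ f(x₀) for all x ∈ D). -/
/-!
Send `v ∈ ℝⁿ` to the function `x ↦ ⟪v, G x⟫`. This linear map into `C(D, ℝ)` is injective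
because `G` is onto the sphere, and for `v ≠ 0` the function `u ↦ ⟪v, u⟫` on the unit sphere
has its maximum `‖v‖` exactly at `u = v / ‖v‖` (the equality case of Cauchy–Schwarz), which
`G` pulls back to a unique maximiser in `D`.
-/

open Metric InnerProductSpace

theorem Function.Bijective.existsUnique_forall_le_comp {α β γ : Type*} [LE γ] {G : α → β}
    (hG : Function.Bijective G) (f : β → γ) :
    (∃! x, ∀ y, f (G y) ≤ f (G x)) ↔ ∃! b, ∀ c, f c ≤ f b :=
  (Equiv.ofBijective G hG).existsUnique_congr fun _ ↦
    (Equiv.ofBijective G hG).forall_congr_right (q := fun c ↦ f c ≤ f _)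

section Sphere

variable {E : Type*} [NormedAddCommGroup E] [InnerProductSpace ℝ E]

theorem inv_norm_smul_mem_sphere {v : E} (hv : v ≠ 0) : ‖v‖⁻¹ • v ∈ sphere (0 : E) 1 := by
  simpa using norm_smul_inv_norm (𝕜 := ℝ) hv

theorem real_inner_inv_norm_smul_self (v : E) : ⟪v, ‖v‖⁻¹ • v⟫_ℝ = ‖v‖ := by
  rcases eq_or_ne v 0 with rfl | hv
  · simp
  · rw [real_inner_smul_right, real_inner_self_eq_norm_sq]
    field_simp

theorem real_inner_le_norm_of_mem_sphere (v : E) {u : E} (hu : u ∈ sphere (0 : E) 1) :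
    ⟪v, u⟫_ℝ ≤ ‖v‖ := by
  simpa [mem_sphere_zero_iff_norm.mp hu] using real_inner_le_norm v u

theorem eq_inv_norm_smul_of_real_inner_eq_norm {v u : E} (hv : v ≠ 0)
    (hu : u ∈ sphere (0 : E) 1) (h : ⟪v, u⟫_ℝ = ‖v‖) : u = ‖v‖⁻¹ • v := by
  have hu1 : ‖u‖ = 1 := mem_sphere_zero_iff_norm.mp hu
  have hvu : ‖u‖ • v = ‖v‖ • u := inner_eq_norm_mul_iff_real.mp (by rw [h, hu1, mul_one])
  rw [hu1, one_smul] at hvu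
  exact (eq_inv_smul_iff₀ (norm_ne_zero_iff.mpr hv)).mpr hvu.symm

theorem existsUnique_forall_real_inner_le_on_sphere {v : E} (hv : v ≠ 0) :
    ∃! u : sphere (0 : E) 1, ∀ w : sphere (0 : E) 1, ⟪v, w⟫_ℝ ≤ ⟪v, u⟫_ℝ := by
  refine ⟨⟨_, inv_norm_smul_mem_sphere hv⟩, fun w ↦ ?_, fun u hu ↦ Subtype.ext ?_⟩
  · rw [real_inner_inv_norm_smul_self]
    exact real_inner_le_norm_of_mem_sphere v w.2
  · refine eq_inv_norm_smul_of_real_inner_eq_norm hv u.2 (le_antisymm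
      (real_inner_le_norm_of_mem_sphere v u.2) ?_)
    simpa [real_inner_inv_norm_smul_self] using hu ⟨_, inv_norm_smul_mem_sphere hv⟩

end Sphere

section InnerComp

variable {D E : Type*} [TopologicalSpace D] [NormedAddCommGroup E] [InnerProductSpace ℝ E]
  (G : D → sphere (0 : E) 1) (hG : Continuous G)

def innerComp : E →ₗ[ℝ] C(D, ℝ) where
  toFun v := ⟨fun x ↦ ⟪v, (G x : E)⟫_ℝ, continuous_const.inner (continuous_subtype_val.comp hG)⟩
  map_add' v w := by ext; simp [inner_add_left]
  map_smul' c v := by ext; simp [real_inner_smul_left]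

@[simp]
theorem innerComp_apply (v : E) (x : D) : innerComp G hG v x = ⟪v, (G x : E)⟫_ℝ := rfl

variable {G}

theorem innerComp_injective (hGs : Function.Surjective G) : Function.Injective (innerComp G hG) := by
  refine (injective_iff_map_eq_zero _).mpr fun v hv ↦ ?_
  by_contra hv0
  obtain ⟨x, hx⟩ := hGs ⟨_, inv_norm_smul_mem_sphere hv0⟩
  have hval : innerComp G hG v x = ‖v‖ := by
    rw [innerComp_apply, hx, real_inner_inv_norm_smul_self]
  rw [hv, ContinuousMap.zero_apply, eq_comm, norm_eq_zero] at hval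
  exact hv0 hval

theorem existsUnique_forall_innerComp_le (hGb : Function.Bijective G) {v : E} (hv : v ≠ 0) :
    ∃! x₀, ∀ x, innerComp G hG v x ≤ innerComp G hG v x₀ :=
  (hGb.existsUnique_forall_le_comp fun u ↦ ⟪v, (u : E)⟫_ℝ).mpr
    (existsUnique_forall_real_inner_le_on_sphere hv)

end InnerComp

theorem stmt_0_general (n : ℕ) (D : Type*) [TopologicalSpace D]
    (G : D → Metric.sphere (0 : EuclideanSpace ℝ (Fin n)) 1)
    (hGc : Continuous G) (hGb : Function.Bijective G) :
    ∃ V : Submodule ℝ C(D, ℝ), Module.finrank ℝ V = n ∧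
      ∀ f ∈ V, f ≠ 0 → ∃! x₀ : D, ∀ x : D, f x ≤ f x₀ := by
  refine ⟨LinearMap.range (innerComp G hGc), ?_, ?_⟩
  · rw [LinearMap.finrank_range_of_inj (innerComp_injective hGc hGb.surjective),
      finrank_euclideanSpace_fin]
  · rintro _ ⟨v, rfl⟩ hf
    exact existsUnique_forall_innerComp_le hGc hGb (by rintro rfl; exact hf (map_zero _))

/-- If `n ≥ 2` and there is a continuous bijection from a topological
space `D` onto the unit sphere `S^{n-1}` of `ℝⁿ`, then `C(D, ℝ)` contains an
`n`-dimensional linear subspace all of whose nonzero elements attain their maximum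
at exactly one point of `D`. -/
theorem stmt_0 (n : ℕ) (hn : 2 ≤ n) (D : Type*) [TopologicalSpace D]
    (G : D → Metric.sphere (0 : EuclideanSpace ℝ (Fin n)) 1)
    (hGc : Continuous G) (hGb : Function.Bijective G) :
    ∃ V : Submodule ℝ C(D, ℝ), Module.finrank ℝ V = n ∧
      ∀ f ∈ V, f ≠ 0 → ∃! x₀ : D, ∀ x : D, f x ≤ f x₀ :=
  stmt_0_general n D G hGc hGb
end

section
/- Let n ≥ 2 be a positive integer and let D be a topological space containing a closed subset Y such that there exist a continuous bijection F : Y → S^{n-1} and a continuous map G : D → ℝⁿ extending F (i.e., G(y) = F(y) for all y ∈ Y) with ‖G(x)‖₂ < 1 for every x ∈ D \ Y. Then there exists an n-dimensional linear subspace V of C(D, ℝ) such that every nonzero f ∈ V attains its maximum at exactly one point of D. -/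
/-!
For `v ≠ 0` the function `x ↦ ⟪v, G x⟫` is bounded by `‖v‖` because `G` maps into the closed
unit ball, and by Cauchy–Schwarz the bound is reached exactly where `G x = v / ‖v‖`. Since
`G` takes values of norm `< 1` off `Y` and restricts to the bijection `F` on `Y`, that happens
at exactly one point. The map `v ↦ ⟪v, G ·⟫` is injective, as the maximum value `‖v‖` is
positive, so its range is the required `n`-dimensional subspace.
-/

open scoped RealInnerProductSpace

section InnerProductSpace

variable {E : Type*} [NormedAddCommGroup E] [InnerProductSpace ℝ E]

theorem eq_inv_norm_smul_of_norm_le_inner {v w : E} (hv : v ≠ 0) (hw : ‖w‖ ≤ 1)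
    (hvw : ‖v‖ ≤ ⟪v, w⟫) : w = ‖v‖⁻¹ • v := by
  have hv₀ : 0 < ‖v‖ := norm_pos_iff.mpr hv
  have hcs : ⟪v, w⟫ ≤ ‖v‖ * ‖w‖ := real_inner_le_norm v w
  have hw₁ : ‖w‖ = 1 := le_antisymm hw (le_of_mul_le_mul_left (by linarith) hv₀)
  have hsmul : ‖w‖ • v = ‖v‖ • w :=
    inner_eq_norm_mul_iff_real.mp (by rw [hw₁, mul_one] at hcs ⊢; linarith)
  rw [hw₁, one_smul] at hsmul
  exact ((inv_smul_eq_iff₀ hv₀.ne').mpr hsmul).symm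

theorem inner_inv_norm_smul_self (v : E) : ⟪v, ‖v‖⁻¹ • v⟫ = ‖v‖ := by
  rcases eq_or_ne v 0 with rfl | hv
  · simp
  rw [real_inner_smul_right, real_inner_self_eq_norm_sq]
  field_simp [norm_ne_zero_iff.mpr hv]

end InnerProductSpace

namespace ContinuousMap

variable {D : Type*} [TopologicalSpace D]
  {E : Type*} [NormedAddCommGroup E] [InnerProductSpace ℝ E]

def innerLeftLinearMap (G : C(D, E)) : E →ₗ[ℝ] C(D, ℝ) where
  toFun v := ⟨fun x => ⟪v, G x⟫, continuous_const.inner G.continuous⟩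
  map_add' v w := by ext x; simp [inner_add_left]
  map_smul' c v := by ext x; simp [inner_smul_left]

@[simp]
theorem innerLeftLinearMap_apply (G : C(D, E)) (v : E) (x : D) :
    G.innerLeftLinearMap v x = ⟪v, G x⟫ :=
  rfl

theorem existsUnique_forall_innerLeftLinearMap_le (G : C(D, E)) (hG₁ : ∀ x, ‖G x‖ ≤ 1)
    (hG : ∀ u ∈ Metric.sphere (0 : E) 1, ∃! x, G x = u) {v : E} (hv : v ≠ 0) :
    ∃! x₀, ∀ x, G.innerLeftLinearMap v x ≤ G.innerLeftLinearMap v x₀ := by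
  have hu : ‖v‖⁻¹ • v ∈ Metric.sphere (0 : E) 1 := by
    simp [norm_smul, norm_ne_zero_iff.mpr hv]
  obtain ⟨x₀, hx₀, hx₀_unique⟩ := hG _ hu
  have hmax : G.innerLeftLinearMap v x₀ = ‖v‖ := by
    simp [hx₀, inner_inv_norm_smul_self]
  refine ⟨x₀, fun x => ?_, fun x hx => hx₀_unique x ?_⟩
  · rw [hmax, innerLeftLinearMap_apply]
    exact (real_inner_le_norm v (G x)).trans (mul_le_of_le_one_right (norm_nonneg v) (hG₁ x))
  · exact eq_inv_norm_smul_of_norm_le_inner hv (hG₁ x) (hmax ▸ hx x₀)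

theorem injective_innerLeftLinearMap (G : C(D, E))
    (hG : ∀ u ∈ Metric.sphere (0 : E) 1, ∃ x, G x = u) :
    Function.Injective G.innerLeftLinearMap := by
  refine (injective_iff_map_eq_zero _).mpr fun v hv => ?_
  by_contra hv₀
  obtain ⟨x, hx⟩ := hG (‖v‖⁻¹ • v) (by simp [norm_smul, norm_ne_zero_iff.mpr hv₀])
  have hval := DFunLike.congr_fun hv x
  rw [innerLeftLinearMap_apply, hx, inner_inv_norm_smul_self] at hval
  exact hv₀ (norm_eq_zero.mp hval)

theorem exists_finrank_eq_forall_existsUnique_isMax [FiniteDimensional ℝ E] (G : C(D, E))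
    (hG₁ : ∀ x, ‖G x‖ ≤ 1) (hG : ∀ u ∈ Metric.sphere (0 : E) 1, ∃! x, G x = u) :
    ∃ V : Submodule ℝ C(D, ℝ), Module.finrank ℝ V = Module.finrank ℝ E ∧
      ∀ f ∈ V, f ≠ 0 → ∃! x₀ : D, ∀ x : D, f x ≤ f x₀ := by
  refine ⟨LinearMap.range G.innerLeftLinearMap,
    LinearMap.finrank_range_of_inj
      (G.injective_innerLeftLinearMap fun u hu => (hG u hu).exists), ?_⟩
  rintro f ⟨v, rfl⟩ hf
  exact G.existsUnique_forall_innerLeftLinearMap_le hG₁ hG (by rintro rfl; exact hf (map_zero _))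

end ContinuousMap

theorem stmt_4_general (n : ℕ) (D : Type*) [TopologicalSpace D]
    (Y : Set D)
    (F : Y → Metric.sphere (0 : EuclideanSpace ℝ (Fin n)) 1)
    (hFb : Function.Bijective F)
    (G : D → EuclideanSpace ℝ (Fin n)) (hGc : Continuous G)
    (hGF : ∀ y : Y, G (y : D) = (F y : EuclideanSpace ℝ (Fin n)))
    (hGlt : ∀ x : D, x ∉ Y → ‖G x‖ < 1) :
    ∃ V : Submodule ℝ C(D, ℝ), Module.finrank ℝ V = n ∧
      ∀ f ∈ V, f ≠ 0 → ∃! x₀ : D, ∀ x : D, f x ≤ f x₀ := by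
  have hG₁ : ∀ x, ‖G x‖ ≤ 1 := fun x => by
    by_cases hx : x ∈ Y
    · simp [hGF ⟨x, hx⟩]
    · exact (hGlt x hx).le
  have hG : ∀ u ∈ Metric.sphere (0 : EuclideanSpace ℝ (Fin n)) 1, ∃! x, G x = u := by
    intro u hu
    have hmemY : ∀ x, G x = u → x ∈ Y := fun x hx => by
      by_contra hxY
      exact (hGlt x hxY).ne (by simpa [hx] using hu)
    obtain ⟨y, hy⟩ := hFb.surjective ⟨u, hu⟩
    refine ⟨y, by simp only [hGF, hy], fun x hx => ?_⟩
    have hFx : F ⟨x, hmemY x hx⟩ = F y := Subtype.ext (by rw [← hGF, hx, hy])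
    exact congrArg Subtype.val (hFb.injective hFx)
  simpa using ContinuousMap.exists_finrank_eq_forall_existsUnique_isMax ⟨G, hGc⟩ hG₁ hG

/-- Let `n ≥ 2` and let `D` be a topological space containing a closed
subset `Y` admitting a continuous bijection `F : Y → S^{n-1}` which extends to a
continuous map `G : D → ℝⁿ` with `‖G x‖ < 1` for all `x ∉ Y`. Then `C(D, ℝ)`
contains an `n`-dimensional linear subspace all of whose nonzero elements attain
their maximum at exactly one point of `D`. -/
theorem stmt_4 (n : ℕ) (hn : 2 ≤ n) (D : Type*) [TopologicalSpace D]
    (Y : Set D) (hY : IsClosed Y)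
    (F : Y → Metric.sphere (0 : EuclideanSpace ℝ (Fin n)) 1)
    (hFc : Continuous F) (hFb : Function.Bijective F)
    (G : D → EuclideanSpace ℝ (Fin n)) (hGc : Continuous G)
    (hGF : ∀ y : Y, G (y : D) = (F y : EuclideanSpace ℝ (Fin n)))
    (hGlt : ∀ x : D, x ∉ Y → ‖G x‖ < 1) :
    ∃ V : Submodule ℝ C(D, ℝ), Module.finrank ℝ V = n ∧
      ∀ f ∈ V, f ≠ 0 → ∃! x₀ : D, ∀ x : D, f x ≤ f x₀ :=
  stmt_4_general n D Y F hFb G hGc hGF hGlt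
end

section
/- Let D be a metric space and let V be an n-dimensional linear space of continuous functions from D to ℝ such that every nonzero f ∈ V attains its maximum at exactly one point of D. Let f₁, …, fₙ be a basis of V, let F : D → ℝⁿ be defined by F(y) = (f₁(y), …, fₙ(y)), let D′ ⊆ D be the set of points of maximum of the nonzero functions in V, and let X = F(D′). Then for every v ∈ S^{n-1}, the function g_v : X → ℝ, g_v(x) = ⟨x, v⟩, attains its maximum at exactly one point of X. -/
open scoped RealInnerProductSpace

/-! Since `⟪F y, v⟫ = (∑ i, vᵢ • fᵢ) y` and the `fᵢ` are independent, `x ↦ ⟪x, v⟫` pulls back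
along `F` to a nonzero member of `V`. Its unique point of maximum on `D` lies in `D'`, and any
maximiser of `⟪·, v⟫` on `F '' D'` comes from a point of `D'` that also maximises it on `D`. -/

theorem existsUnique_max_image_of_existsUnique_max {D E β : Type*} [Preorder β]
    {F : D → E} {φ : E → β} {g : D → β} (hφ : ∀ d, φ (F d) = g d) {S : Set D}
    (hg : ∃! d₀, ∀ d, g d ≤ g d₀) (hS : ∀ d₀, (∀ d, g d ≤ g d₀) → d₀ ∈ S) :
    ∃! x₀, x₀ ∈ F '' S ∧ ∀ x ∈ F '' S, φ x ≤ φ x₀ := by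
  obtain ⟨d₀, hd₀, hd₀_unique⟩ := hg
  have hd₀S : F d₀ ∈ F '' S := ⟨d₀, hS d₀ hd₀, rfl⟩
  refine ⟨F d₀, ⟨hd₀S, ?_⟩, ?_⟩
  · rintro _ ⟨d, -, rfl⟩
    simpa only [hφ] using hd₀ d
  · rintro _ ⟨⟨d₁, -, rfl⟩, hd₁⟩
    have h₀₁ : g d₀ ≤ g d₁ := by simpa only [hφ] using hd₁ (F d₀) hd₀S
    rw [hd₀_unique d₁ fun d => (hd₀ d).trans h₀₁]

theorem inner_eq_sum_smul_apply {D ι : Type*} [TopologicalSpace D] [Fintype ι]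
    {f : ι → C(D, ℝ)} {F : D → EuclideanSpace ℝ ι} (hF : ∀ y i, F y i = f i y)
    (v : EuclideanSpace ℝ ι) (y : D) :
    ⟪F y, v⟫ = (∑ i, v i • f i) y := by
  simp only [PiLp.inner_apply, ContinuousMap.coe_sum, ContinuousMap.coe_smul,
    Finset.sum_apply, Pi.smul_apply, smul_eq_mul, RCLike.inner_apply, conj_trivial, hF]

/-- Let `D` be a metric space, `f₁, …, fₙ` linearly independent
continuous functions spanning a subspace `V` of `C(D, ℝ)` all of whose nonzero
elements attain their maximum at exactly one point, `F : D → ℝⁿ` the map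
`F y = (f₁ y, …, fₙ y)`, `D'` the set of points of maximum of nonzero members of
`V`, and `X = F(D')`. Then for every `v ∈ S^{n-1}` the map `x ↦ ⟨x, v⟩` attains its
maximum at exactly one point of `X`. -/
theorem stmt_8 (D : Type*) [MetricSpace D] (n : ℕ)
    (f : Fin n → C(D, ℝ)) (hli : LinearIndependent ℝ f)
    (V : Submodule ℝ C(D, ℝ)) (hV : V = Submodule.span ℝ (Set.range f))
    (hmax : ∀ g ∈ V, g ≠ 0 → ∃! x₀ : D, ∀ x : D, g x ≤ g x₀)
    (F : D → EuclideanSpace ℝ (Fin n)) (hF : ∀ (y : D) (i : Fin n), F y i = f i y)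
    (D' : Set D) (hD' : D' = {d : D | ∃ g ∈ V, g ≠ 0 ∧ ∀ x : D, g x ≤ g d})
    (X : Set (EuclideanSpace ℝ (Fin n))) (hX : X = F '' D') :
    ∀ v ∈ Metric.sphere (0 : EuclideanSpace ℝ (Fin n)) 1,
      ∃! x₀, x₀ ∈ X ∧ ∀ x ∈ X, ⟪x, v⟫ ≤ ⟪x₀, v⟫ := by
  intro v hv
  set g : C(D, ℝ) := ∑ i, v i • f i
  have hgV : g ∈ V := hV ▸ Submodule.sum_mem _ fun i _ =>
    Submodule.smul_mem _ _ (Submodule.subset_span ⟨i, rfl⟩)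
  have hg0 : g ≠ 0 := by
    intro hg
    have hv0 : v = 0 := by
      ext i
      exact Fintype.linearIndependent_iff.mp hli v hg i
    simp [hv0] at hv
  subst hX hD'
  exact existsUnique_max_image_of_existsUnique_max (φ := (⟪·, v⟫))
    (inner_eq_sum_smul_apply hF v) (hmax g hgV hg0) fun d₀ hd₀ => ⟨g, hgV, hg0, hd₀⟩
end

section
/- Let D be a metric space and let V be an n-dimensional linear space of continuous functions from D to ℝ such that every nonzero f ∈ V attains its maximum at exactly one point of D. Let f₁, …, fₙ be a basis of V, let F : D → ℝⁿ be defined by F(y) = (f₁(y), …, fₙ(y)), let D′ ⊆ D be the set of points of maximum of the nonzero functions in V, and let X = F(D′). Then for every x ∈ X there exists v ∈ S^{n-1} such that x is the unique point of maximum of the function g_v : X → ℝ, g_v(z) = ⟨z, v⟩. -/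
open scoped RealInnerProductSpace

/-!
A nonzero `g = ∑ cᵢ fᵢ ∈ V` with maximum point `d` is, on `D`, the linear functional
`z ↦ ⟪z, c⟫` composed with `F`. Hence `F d` maximizes `⟪·, c⟫` on `X`, and any other maximizer
`F y` of it on `X` comes from a maximum point `y` of `g`, so `y = d` because `g` has only one.
-/

lemma inner_normalize_le_inner_normalize_iff {E : Type*} [NormedAddCommGroup E]
    [InnerProductSpace ℝ E] {w : E} (hw : w ≠ 0) (a b : E) :
    ⟪a, NormedSpace.normalize w⟫ ≤ ⟪b, NormedSpace.normalize w⟫ ↔ ⟪a, w⟫ ≤ ⟪b, w⟫ := by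
  simp only [NormedSpace.normalize, real_inner_smul_right]
  exact mul_le_mul_iff_of_pos_left (inv_pos.mpr (norm_pos_iff.mpr hw))

lemma inner_toLp_eq_sum_smul_apply {D ι : Type*} [TopologicalSpace D] [Fintype ι]
    (f : ι → C(D, ℝ)) (F : D → EuclideanSpace ℝ ι) (hF : ∀ y i, F y i = f i y)
    (c : ι → ℝ) (y : D) :
    ⟪F y, WithLp.toLp 2 c⟫ = (∑ i, c i • f i) y := by
  simp [PiLp.inner_apply, hF]

lemma image_isMaxOn_unique {α β : Type*} (F : α → β) (h : β → ℝ) {s : Set α} {d : α}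
    (hd : ∀ y ∈ s, h (F y) ≤ h (F d)) (hds : d ∈ s)
    (huniq : ∀ y ∈ s, h (F d) ≤ h (F y) → y = d) :
    (∀ z ∈ F '' s, h z ≤ h (F d)) ∧ ∀ z ∈ F '' s, (∀ w ∈ F '' s, h w ≤ h z) → z = F d := by
  refine ⟨Set.forall_mem_image.mpr hd, ?_⟩
  rintro _ ⟨y, hy, rfl⟩ hmax
  rw [huniq y hy (hmax _ (Set.mem_image_of_mem F hds))]

theorem stmt_9_general (D : Type*) [MetricSpace D] (n : ℕ)
    (f : Fin n → C(D, ℝ))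
    (V : Submodule ℝ C(D, ℝ)) (hV : V = Submodule.span ℝ (Set.range f))
    (hmax : ∀ g ∈ V, g ≠ 0 → ∃! x₀ : D, ∀ x : D, g x ≤ g x₀)
    (F : D → EuclideanSpace ℝ (Fin n)) (hF : ∀ (y : D) (i : Fin n), F y i = f i y)
    (D' : Set D) (hD' : D' = {d : D | ∃ g ∈ V, g ≠ 0 ∧ ∀ x : D, g x ≤ g d})
    (X : Set (EuclideanSpace ℝ (Fin n))) (hX : X = F '' D') :
    ∀ x ∈ X, ∃ v ∈ Metric.sphere (0 : EuclideanSpace ℝ (Fin n)) 1,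
      (∀ z ∈ X, ⟪z, v⟫ ≤ ⟪x, v⟫) ∧
      ∀ z ∈ X, (∀ w ∈ X, ⟪w, v⟫ ≤ ⟪z, v⟫) → z = x := by
  subst hX
  rintro _ ⟨d, hdD', rfl⟩
  obtain ⟨g, hgV, hg0, hd⟩ := hD' ▸ hdD'
  obtain ⟨c, rfl⟩ := (Submodule.mem_span_range_iff_exists_fun ℝ).mp (hV ▸ hgV)
  obtain ⟨x₀, -, hx₀⟩ := hmax _ hgV hg0
  have hc : WithLp.toLp 2 c ≠ 0 := by
    rintro hc
    exact hg0 (by simp [(WithLp.toLp_eq_zero 2).mp hc])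
  have hinner : ∀ y, ⟪F y, WithLp.toLp 2 c⟫ = (∑ i, c i • f i) y :=
    inner_toLp_eq_sum_smul_apply f F hF c
  refine ⟨NormedSpace.normalize (WithLp.toLp 2 c), by simpa using hc, ?_⟩
  simp only [inner_normalize_le_inner_normalize_iff hc]
  refine image_isMaxOn_unique F (fun z => ⟪z, WithLp.toLp 2 c⟫) (fun y _ => ?_) hdD' ?_
  · simpa only [hinner] using hd y
  · intro y _ hdy
    simp only [hinner] at hdy
    rw [hx₀ y fun x => (hd x).trans hdy, hx₀ d hd]

/-- With the setting of Statement 8 (metric space `D`, basis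
`f₁, …, fₙ` of `V`, `F y = (f₁ y, …, fₙ y)`, `D'` the points of maximum, and
`X = F(D')`), for every `x ∈ X` there is `v ∈ S^{n-1}` such that `x` is the unique
point of maximum on `X` of the map `z ↦ ⟨z, v⟩`. -/
theorem stmt_9 (D : Type*) [MetricSpace D] (n : ℕ)
    (f : Fin n → C(D, ℝ)) (hli : LinearIndependent ℝ f)
    (V : Submodule ℝ C(D, ℝ)) (hV : V = Submodule.span ℝ (Set.range f))
    (hmax : ∀ g ∈ V, g ≠ 0 → ∃! x₀ : D, ∀ x : D, g x ≤ g x₀)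
    (F : D → EuclideanSpace ℝ (Fin n)) (hF : ∀ (y : D) (i : Fin n), F y i = f i y)
    (D' : Set D) (hD' : D' = {d : D | ∃ g ∈ V, g ≠ 0 ∧ ∀ x : D, g x ≤ g d})
    (X : Set (EuclideanSpace ℝ (Fin n))) (hX : X = F '' D') :
    ∀ x ∈ X, ∃ v ∈ Metric.sphere (0 : EuclideanSpace ℝ (Fin n)) 1,
      (∀ z ∈ X, ⟪z, v⟫ ≤ ⟪x, v⟫) ∧
      ∀ z ∈ X, (∀ w ∈ X, ⟪w, v⟫ ≤ ⟪z, v⟫) → z = x :=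
  stmt_9_general D n f V hV hmax F hF D' hD' X hX
end

section
/- Let D be a metric space and let V be an n-dimensional linear space of continuous functions from D to ℝ such that every nonzero f ∈ V attains its maximum at exactly one point of D. Let f₁, …, fₙ be a basis of V, let F : D → ℝⁿ be defined by F(y) = (f₁(y), …, fₙ(y)), let D′ ⊆ D be the set of points of maximum of the nonzero functions in V, and let X = F(D′) ⊆ ℝⁿ. Then the restriction F|_{D′} : D′ → X is a continuous bijection, where D′ carries the metric induced from D and X carries the Euclidean metric of ℝⁿ. -/
/-!
Continuity is coordinatewise. For injectivity, if `F a = F b` then every `g ∈ V`, being a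
combination of the `fᵢ`, takes the same value at `a` and `b`; if `a ∈ D'` is the maximum point
of some nonzero `g ∈ V`, then `b` is a maximum point of `g` as well, and uniqueness of the
maximum point forces `a = b`.
-/

open Submodule Set

theorem PiLp.continuous_of_forall_continuous_apply {p : ENNReal} {X ι : Type*}
    [TopologicalSpace X] {β : ι → Type*} [∀ i, TopologicalSpace (β i)] {F : X → PiLp p β}
    (h : ∀ i, Continuous fun x => F x i) : Continuous F :=
  (PiLp.continuous_toLp p β).comp (continuous_pi h)

namespace ContinuousMap

variable {D : Type*} [TopologicalSpace D]

theorem apply_eq_apply_of_mem_span {R M ι : Type*} [Semiring R] [TopologicalSpace M]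
    [AddCommMonoid M] [ContinuousAdd M] [Module R M] [ContinuousConstSMul R M]
    {f : ι → C(D, M)} {a b : D} (h : ∀ i, f i a = f i b) {g : C(D, M)}
    (hg : g ∈ span R (range f)) : g a = g b := by
  have hspan : span R (range f) ≤ LinearMap.eqLocus
      (evalCLM (R := R) (M := M) a).toLinearMap (evalCLM (R := R) (M := M) b).toLinearMap :=
    span_le.2 <| range_subset_iff.2 h
  exact hspan hg

theorem eq_of_forall_apply_eq_of_existsUnique_max {V : Submodule ℝ C(D, ℝ)}
    (hmax : ∀ g ∈ V, g ≠ 0 → ∃! x₀ : D, ∀ x : D, g x ≤ g x₀) {a b : D}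
    (ha : ∃ g ∈ V, g ≠ 0 ∧ ∀ x : D, g x ≤ g a) (hab : ∀ g ∈ V, g a = g b) : a = b := by
  obtain ⟨g, hgV, hg0, hga⟩ := ha
  have hgb : ∀ x, g x ≤ g b := fun x => (hga x).trans_eq (hab g hgV)
  exact (hmax g hgV hg0).unique hga hgb

end ContinuousMap

theorem stmt_10_general (D : Type*) [MetricSpace D] (n : ℕ)
    (f : Fin n → C(D, ℝ))
    (V : Submodule ℝ C(D, ℝ)) (hV : V = Submodule.span ℝ (Set.range f))
    (hmax : ∀ g ∈ V, g ≠ 0 → ∃! x₀ : D, ∀ x : D, g x ≤ g x₀)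
    (F : D → EuclideanSpace ℝ (Fin n)) (hF : ∀ (y : D) (i : Fin n), F y i = f i y)
    (D' : Set D) (hD' : D' = {d : D | ∃ g ∈ V, g ≠ 0 ∧ ∀ x : D, g x ≤ g d})
    (X : Set (EuclideanSpace ℝ (Fin n))) (hX : X = F '' D') :
    ContinuousOn F D' ∧ Set.InjOn F D' ∧ F '' D' = X := by
  have hFcont : Continuous F :=
    PiLp.continuous_of_forall_continuous_apply fun i => by
      simpa only [hF] using (f i).continuous
  refine ⟨hFcont.continuousOn, fun a ha b _ hab => ?_, hX.symm⟩
  rw [hD'] at ha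
  refine ContinuousMap.eq_of_forall_apply_eq_of_existsUnique_max hmax ha fun g hg => ?_
  rw [hV] at hg
  exact ContinuousMap.apply_eq_apply_of_mem_span (fun i => by rw [← hF, ← hF, hab]) hg

/-- With the setting of Statement 8 (metric space `D`, basis
`f₁, …, fₙ` of `V`, `F y = (f₁ y, …, fₙ y)`, `D'` the points of maximum, and
`X = F(D')`), the restriction of `F` to `D'` is a continuous bijection onto `X`,
i.e. `F` is continuous on `D'` and injective on `D'` (its image being `X`). -/
theorem stmt_10 (D : Type*) [MetricSpace D] (n : ℕ)
    (f : Fin n → C(D, ℝ)) (hli : LinearIndependent ℝ f)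
    (V : Submodule ℝ C(D, ℝ)) (hV : V = Submodule.span ℝ (Set.range f))
    (hmax : ∀ g ∈ V, g ≠ 0 → ∃! x₀ : D, ∀ x : D, g x ≤ g x₀)
    (F : D → EuclideanSpace ℝ (Fin n)) (hF : ∀ (y : D) (i : Fin n), F y i = f i y)
    (D' : Set D) (hD' : D' = {d : D | ∃ g ∈ V, g ≠ 0 ∧ ∀ x : D, g x ≤ g d})
    (X : Set (EuclideanSpace ℝ (Fin n))) (hX : X = F '' D') :
    ContinuousOn F D' ∧ Set.InjOn F D' ∧ F '' D' = X :=
  stmt_10_general D n f V hV hmax F hF D' hD' X hX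
end

section
/- Let n ≥ 2 and let X ⊆ ℝⁿ be a set with more than one point such that: (1) for every v ∈ S^{n-1}, the function g_v : X → ℝ, g_v(x) = ⟨x, v⟩, attains its maximum at exactly one point x_v ∈ X; and (2) for every x ∈ X there exists v ∈ S^{n-1} such that x is the unique point of maximum of g_v. Let f : S^{n-1} → X be the map f(v) = x_v. Then for every compact subset K of ℝⁿ with K ⊆ X, the preimage f⁻¹(K) ⊆ S^{n-1} is a compact subset of ℝⁿ. -/
/-!
The pairs `(v, x)` such that `x` maximizes `⟪·, v⟫` on `X` form a closed set, being cut out by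
the non-strict inequalities `⟪z, v⟫ ≤ ⟪x, v⟫`, `z ∈ X`. Uniqueness of the maximizer makes
`S ∩ f⁻¹' K` the projection to the first factor of this closed set intersected with the compact
`S ×ˢ K`, hence compact.
-/

open scoped RealInnerProductSpace

section ArgmaxInner

variable {E : Type*} [NormedAddCommGroup E] [InnerProductSpace ℝ E]

def argmaxInnerGraph (X : Set E) : Set (E × E) :=
  {p | ∀ z ∈ X, ⟪z, p.1⟫ ≤ ⟪p.2, p.1⟫}

theorem isClosed_argmaxInnerGraph (X : Set E) : IsClosed (argmaxInnerGraph X) := by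
  simp only [argmaxInnerGraph, Set.ofPred_forall]
  exact isClosed_biInter fun z _ =>
    isClosed_le (continuous_const.inner continuous_fst) (continuous_snd.inner continuous_fst)

theorem isCompact_inter_preimage_of_isArgmax {S X K : Set E} {f : E → E}
    (hS : IsCompact S) (hK : IsCompact K) (hKX : K ⊆ X)
    (hf : ∀ v ∈ S, f v ∈ X ∧ ∀ x ∈ X, ⟪x, v⟫ ≤ ⟪f v, v⟫)
    (huniq : ∀ v ∈ S, ∀ x ∈ X, (∀ z ∈ X, ⟪z, v⟫ ≤ ⟪x, v⟫) → x = f v) :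
    IsCompact (S ∩ f ⁻¹' K) := by
  have hproj : S ∩ f ⁻¹' K = Prod.fst '' (S ×ˢ K ∩ argmaxInnerGraph X) := by
    ext v
    constructor
    · rintro ⟨hv, hfv⟩
      exact ⟨(v, f v), ⟨⟨hv, hfv⟩, (hf v hv).2⟩, rfl⟩
    · rintro ⟨⟨v, x⟩, ⟨⟨hv, hx⟩, hmax⟩, rfl⟩
      exact ⟨hv, huniq v hv x (hKX hx) hmax ▸ hx⟩
  rw [hproj]
  exact ((hS.prod hK).inter_right (isClosed_argmaxInnerGraph X)).image continuous_fst

end ArgmaxInner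

theorem stmt_11_general (n : ℕ) (X : Set (EuclideanSpace ℝ (Fin n)))
    (h1 : ∀ v ∈ Metric.sphere (0 : EuclideanSpace ℝ (Fin n)) 1,
      ∃! x₀, x₀ ∈ X ∧ ∀ x ∈ X, ⟪x, v⟫ ≤ ⟪x₀, v⟫)
    (f : EuclideanSpace ℝ (Fin n) → EuclideanSpace ℝ (Fin n))
    (hf : ∀ v ∈ Metric.sphere (0 : EuclideanSpace ℝ (Fin n)) 1,
      f v ∈ X ∧ ∀ x ∈ X, ⟪x, v⟫ ≤ ⟪f v, v⟫)
    (K : Set (EuclideanSpace ℝ (Fin n))) (hK : IsCompact K) (hKX : K ⊆ X) :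
    IsCompact (Metric.sphere (0 : EuclideanSpace ℝ (Fin n)) 1 ∩ f ⁻¹' K) :=
  isCompact_inter_preimage_of_isArgmax (isCompact_sphere 0 1) hK hKX hf
    fun v hv x hx hmax => (h1 v hv).unique ⟨hx, hmax⟩ (hf v hv)

/-- Let `n ≥ 2` and let `X ⊆ ℝⁿ` have more than one point, such that
for each `v ∈ S^{n-1}` the map `x ↦ ⟨x, v⟩` attains its maximum at exactly one point
of `X`, and each `x ∈ X` is the unique point of maximum of some such map. If
`f : S^{n-1} → X` sends `v` to the point of maximum of `x ↦ ⟨x, v⟩`, then for every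
compact `K ⊆ X` the preimage `f⁻¹(K) ⊆ S^{n-1}` is compact. -/
theorem stmt_11 (n : ℕ) (hn : 2 ≤ n) (X : Set (EuclideanSpace ℝ (Fin n)))
    (hXnt : Set.Nontrivial X)
    (h1 : ∀ v ∈ Metric.sphere (0 : EuclideanSpace ℝ (Fin n)) 1,
      ∃! x₀, x₀ ∈ X ∧ ∀ x ∈ X, ⟪x, v⟫ ≤ ⟪x₀, v⟫)
    (h2 : ∀ x ∈ X, ∃ v ∈ Metric.sphere (0 : EuclideanSpace ℝ (Fin n)) 1,
      (∀ z ∈ X, ⟪z, v⟫ ≤ ⟪x, v⟫) ∧ ∀ z ∈ X, (∀ w ∈ X, ⟪w, v⟫ ≤ ⟪z, v⟫) → z = x)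
    (f : EuclideanSpace ℝ (Fin n) → EuclideanSpace ℝ (Fin n))
    (hf : ∀ v ∈ Metric.sphere (0 : EuclideanSpace ℝ (Fin n)) 1,
      f v ∈ X ∧ ∀ x ∈ X, ⟪x, v⟫ ≤ ⟪f v, v⟫)
    (K : Set (EuclideanSpace ℝ (Fin n))) (hK : IsCompact K) (hKX : K ⊆ X) :
    IsCompact (Metric.sphere (0 : EuclideanSpace ℝ (Fin n)) 1 ∩ f ⁻¹' K) :=
  stmt_11_general n X h1 f hf K hK hKX
end

section
/- Let n ≥ 2 and let X ⊆ ℝⁿ be a set with more than one point such that: (1) for every v ∈ S^{n-1}, the function g_v : X → ℝ, g_v(x) = ⟨x, v⟩, attains its maximum at exactly one point x_v ∈ X; and (2) for every x ∈ X there exists v ∈ S^{n-1} such that x is the unique point of maximum of g_v. Let f : S^{n-1} → X be the map f(v) = x_v, where S^{n-1} and X carry the Euclidean metric of ℝⁿ. Then f is continuous if and only if X is compact. -/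
open scoped RealInnerProductSpace
open Filter Topology

/-!
The relation "`x` maximizes `⟪·, v⟫` on `X`" is closed in `(v, x)`, so every cluster point of `f`
at `v` maximizes `⟪·, v⟫` and hence, by uniqueness, equals `f v`; when `X` is compact this forces
`f w → f v`. Conversely, since every point of `X` is the unique maximizer for some
direction, `X` is the image of the compact sphere under `f`.
-/

section Maximizers

variable {α β γ : Type*} [Preorder γ] {φ : β → α → γ} {S : Set α} {X : Set β} {f : α → β}

theorem Set.MapsTo.image_eq_of_forall_exists_isMaxOn (hfX : Set.MapsTo f S X)
    (hmax : ∀ v ∈ S, IsMaxOn (φ · v) X (f v))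
    (hexp : ∀ x ∈ X, ∃ v ∈ S, ∀ z ∈ X, IsMaxOn (φ · v) X z → z = x) : f '' S = X := by
  refine (hfX.image_subset).antisymm fun x hx => ?_
  obtain ⟨v, hv, huniq⟩ := hexp x hx
  exact ⟨v, hv, huniq (f v) (hfX hv) (hmax v hv)⟩

variable [TopologicalSpace α] [TopologicalSpace β] [TopologicalSpace γ] [OrderClosedTopology γ]

theorem IsMaxOn.of_tendsto {ι : Type*} {l : Filter ι} [l.NeBot]
    (hφ : Continuous (Function.uncurry φ)) {w : ι → α} {y : ι → β} {v : α} {x : β}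
    (hw : Tendsto w l (𝓝 v)) (hy : Tendsto y l (𝓝 x))
    (hmax : ∀ᶠ i in l, IsMaxOn (φ · (w i)) X (y i)) : IsMaxOn (φ · v) X x :=
  isMaxOn_iff.2 fun z hz =>
    le_of_tendsto_of_tendsto
      ((hφ.tendsto (z, v)).comp (tendsto_const_nhds.prodMk_nhds hw))
      ((hφ.tendsto (x, v)).comp (hy.prodMk_nhds hw))
      (hmax.mono fun _ hi => isMaxOn_iff.1 hi z hz)

theorem IsMaxOn.of_mapClusterPt (hφ : Continuous (Function.uncurry φ))
    (hmax : ∀ v ∈ S, IsMaxOn (φ · v) X (f v)) {v : α} {x : β} (hx : MapClusterPt x (𝓝[S] v) f) :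
    IsMaxOn (φ · v) X x := by
  obtain ⟨U, hUS, hfU⟩ := mapClusterPt_iff_ultrafilter.1 hx
  exact .of_tendsto hφ (hUS.trans nhdsWithin_le_nhds) hfU
    (eventually_of_mem (hUS self_mem_nhdsWithin) hmax)

/-- A special case of Berge's maximum theorem. -/
theorem continuousOn_of_isMaxOn_of_isCompact (hφ : Continuous (Function.uncurry φ))
    (hX : IsCompact X) (hfX : Set.MapsTo f S X) (hmax : ∀ v ∈ S, IsMaxOn (φ · v) X (f v))
    (huniq : ∀ v ∈ S, ∀ x ∈ X, IsMaxOn (φ · v) X x → x = f v) : ContinuousOn f S :=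
  fun v hv => hX.tendsto_nhds_of_unique_mapClusterPt
    (eventually_of_mem self_mem_nhdsWithin hfX)
    fun x hx hclus => huniq v hv x hx (.of_mapClusterPt hφ hmax hclus)

end Maximizers

theorem stmt_12_general (n : ℕ) (X : Set (EuclideanSpace ℝ (Fin n)))
    (h1 : ∀ v ∈ Metric.sphere (0 : EuclideanSpace ℝ (Fin n)) 1,
      ∃! x₀, x₀ ∈ X ∧ ∀ x ∈ X, ⟪x, v⟫ ≤ ⟪x₀, v⟫)
    (h2 : ∀ x ∈ X, ∃ v ∈ Metric.sphere (0 : EuclideanSpace ℝ (Fin n)) 1,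
      (∀ z ∈ X, ⟪z, v⟫ ≤ ⟪x, v⟫) ∧ ∀ z ∈ X, (∀ w ∈ X, ⟪w, v⟫ ≤ ⟪z, v⟫) → z = x)
    (f : EuclideanSpace ℝ (Fin n) → EuclideanSpace ℝ (Fin n))
    (hf : ∀ v ∈ Metric.sphere (0 : EuclideanSpace ℝ (Fin n)) 1,
      f v ∈ X ∧ ∀ x ∈ X, ⟪x, v⟫ ≤ ⟪f v, v⟫) :
    ContinuousOn f (Metric.sphere (0 : EuclideanSpace ℝ (Fin n)) 1) ↔ IsCompact X := by
  have hfX : Set.MapsTo f (Metric.sphere 0 1) X := fun v hv => (hf v hv).1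
  have hmax : ∀ v ∈ Metric.sphere (0 : EuclideanSpace ℝ (Fin n)) 1, IsMaxOn (⟪·, v⟫) X (f v) :=
    fun v hv => isMaxOn_iff.2 (hf v hv).2
  constructor
  · intro hcont
    rw [← hfX.image_eq_of_forall_exists_isMaxOn hmax fun x hx => ?_]
    · exact (isCompact_sphere 0 1).image_of_continuousOn hcont
    obtain ⟨v, hv, -, huniq⟩ := h2 x hx
    exact ⟨v, hv, fun z hz hzmax => huniq z hz (isMaxOn_iff.1 hzmax)⟩
  · intro hX
    refine continuousOn_of_isMaxOn_of_isCompact continuous_inner hX hfX hmax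
      fun v hv x hx hxmax => ?_
    exact (h1 v hv).unique ⟨hx, isMaxOn_iff.1 hxmax⟩ ⟨(hf v hv).1, (hf v hv).2⟩

/-- With `X` and `f` as in Statement 11 (`X ⊆ ℝⁿ` with more than one
point, each `v ∈ S^{n-1}` giving a unique point of maximum `f v ∈ X` of
`x ↦ ⟨x, v⟩`, and each point of `X` arising this way), the map `f` is continuous on
`S^{n-1}` if and only if `X` is compact. -/
theorem stmt_12 (n : ℕ) (hn : 2 ≤ n) (X : Set (EuclideanSpace ℝ (Fin n)))
    (hXnt : Set.Nontrivial X)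
    (h1 : ∀ v ∈ Metric.sphere (0 : EuclideanSpace ℝ (Fin n)) 1,
      ∃! x₀, x₀ ∈ X ∧ ∀ x ∈ X, ⟪x, v⟫ ≤ ⟪x₀, v⟫)
    (h2 : ∀ x ∈ X, ∃ v ∈ Metric.sphere (0 : EuclideanSpace ℝ (Fin n)) 1,
      (∀ z ∈ X, ⟪z, v⟫ ≤ ⟪x, v⟫) ∧ ∀ z ∈ X, (∀ w ∈ X, ⟪w, v⟫ ≤ ⟪z, v⟫) → z = x)
    (f : EuclideanSpace ℝ (Fin n) → EuclideanSpace ℝ (Fin n))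
    (hf : ∀ v ∈ Metric.sphere (0 : EuclideanSpace ℝ (Fin n)) 1,
      f v ∈ X ∧ ∀ x ∈ X, ⟪x, v⟫ ≤ ⟪f v, v⟫) :
    ContinuousOn f (Metric.sphere (0 : EuclideanSpace ℝ (Fin n)) 1) ↔ IsCompact X :=
  stmt_12_general n X h1 h2 f hf
end

section
/- Let n ≥ 2 and m ≥ 1 be positive integers with m ≥ n. Then there exists a compact subset K of ℝᵐ and an n-dimensional linear subspace V of C(K, ℝ) such that every nonzero f ∈ V attains its maximum at exactly one point of K. (One may take K to be the unit sphere S^{n-1}, embedded in ℝᵐ.) -/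
/-!
Take for `K` the unit sphere of an `n`-dimensional subspace `W` of `ℝᵐ` and for `V` the
restrictions to `K` of the linear forms `⟪a, ·⟫` with `a ∈ W`. By the equality case of
Cauchy–Schwarz, for `a ≠ 0` the form `⟪a, ·⟫` attains its maximum `‖a‖` on `K` only at
`‖a‖⁻¹ • a`; evaluating there also shows that `a ↦ ⟪a, ·⟫|_K` is injective, so `dim V = n`.
-/

open Metric
open scoped RealInnerProductSpace

theorem exists_submodule_finrank_eq {K V : Type*} [DivisionRing K] [AddCommGroup V]
    [Module K V] [FiniteDimensional K V] {n : ℕ} (hn : n ≤ Module.finrank K V) :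
    ∃ W : Submodule K V, Module.finrank K W = n := by
  let b := Module.finBasis K V
  refine ⟨Submodule.span K (Set.range (b ∘ Fin.castLE hn)), ?_⟩
  rw [finrank_span_eq_card (b.linearIndependent.comp _ (Fin.castLE_injective hn)),
    Fintype.card_fin]

section InnerProductSpace

variable {E : Type*} [NormedAddCommGroup E] [InnerProductSpace ℝ E]

theorem real_inner_eq_norm_iff_of_norm_eq_one {a x : E} (ha : a ≠ 0) (hx : ‖x‖ = 1) :
    ⟪a, x⟫ = ‖a‖ ↔ x = ‖a‖⁻¹ • a := by
  have := inner_eq_norm_mul_iff_real (x := a) (y := x)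
  rw [hx, mul_one, one_smul] at this
  rw [this, eq_inv_smul_iff₀ (norm_ne_zero_iff.2 ha), eq_comm]

namespace Submodule

variable (W : Submodule ℝ E)

def unitSphere : Set E := (W : Set E) ∩ sphere 0 1

theorem isCompact_unitSphere [FiniteDimensional ℝ E] : IsCompact W.unitSphere :=
  (isCompact_sphere 0 1).inter_left W.closed_of_finiteDimensional

theorem inv_norm_smul_mem_unitSphere {a : E} (haW : a ∈ W) (ha : a ≠ 0) :
    ‖a‖⁻¹ • a ∈ W.unitSphere :=
  ⟨W.smul_mem _ haW, mem_sphere_zero_iff_norm.2 (norm_smul_inv_norm ha)⟩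

def innerOnUnitSphere : W →ₗ[ℝ] C(W.unitSphere, ℝ) where
  toFun a := ⟨fun x => ⟪(a : E), x⟫, continuous_const.inner continuous_subtype_val⟩
  map_add' a b := by ext x; simp [inner_add_left]
  map_smul' c a := by ext x; simp [inner_smul_left]

@[simp]
theorem innerOnUnitSphere_apply (a : W) (x : W.unitSphere) :
    W.innerOnUnitSphere a x = ⟪(a : E), x⟫ :=
  rfl

variable {W}

theorem innerOnUnitSphere_eq_norm_iff {a : W} (ha : a ≠ 0) (x : W.unitSphere) :
    W.innerOnUnitSphere a x = ‖(a : E)‖ ↔ (x : E) = ‖(a : E)‖⁻¹ • (a : E) :=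
  real_inner_eq_norm_iff_of_norm_eq_one (by simpa using ha) (mem_sphere_zero_iff_norm.1 x.2.2)

theorem innerOnUnitSphere_le_norm (a : W) (x : W.unitSphere) :
    W.innerOnUnitSphere a x ≤ ‖(a : E)‖ := by
  simpa [mem_sphere_zero_iff_norm.1 x.2.2] using real_inner_le_norm (a : E) x

theorem existsUnique_innerOnUnitSphere_eq_norm {a : W} (ha : a ≠ 0) :
    ∃! x : W.unitSphere, W.innerOnUnitSphere a x = ‖(a : E)‖ :=
  ⟨⟨_, W.inv_norm_smul_mem_unitSphere a.2 (by simpa using ha)⟩,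
    (innerOnUnitSphere_eq_norm_iff ha _).2 rfl,
    fun _ hy => Subtype.ext ((innerOnUnitSphere_eq_norm_iff ha _).1 hy)⟩

theorem existsUnique_isMax_innerOnUnitSphere {a : W} (ha : a ≠ 0) :
    ∃! x₀ : W.unitSphere, ∀ x, W.innerOnUnitSphere a x ≤ W.innerOnUnitSphere a x₀ := by
  obtain ⟨x₀, hx₀, huniq⟩ := existsUnique_innerOnUnitSphere_eq_norm ha
  refine ⟨x₀, fun x => hx₀ ▸ innerOnUnitSphere_le_norm a x, fun y hy => huniq y ?_⟩
  exact le_antisymm (innerOnUnitSphere_le_norm a y) (hx₀ ▸ hy x₀)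

theorem innerOnUnitSphere_injective : Function.Injective W.innerOnUnitSphere := by
  refine (injective_iff_map_eq_zero _).2 fun a h => ?_
  by_contra ha
  obtain ⟨x₀, hx₀, -⟩ := existsUnique_innerOnUnitSphere_eq_norm ha
  rw [h, ContinuousMap.zero_apply, eq_comm, norm_eq_zero] at hx₀
  exact ha (Subtype.ext hx₀)

end Submodule

end InnerProductSpace

theorem stmt_14_general (n m : ℕ) (hmn : n ≤ m) :
    ∃ K : Set (EuclideanSpace ℝ (Fin m)), IsCompact K ∧
      ∃ V : Submodule ℝ C(K, ℝ), Module.finrank ℝ V = n ∧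
        ∀ f ∈ V, f ≠ 0 → ∃! x₀ : K, ∀ x : K, f x ≤ f x₀ := by
  obtain ⟨W, hW⟩ := exists_submodule_finrank_eq (K := ℝ) (V := EuclideanSpace ℝ (Fin m))
    (by simpa using hmn)
  refine ⟨W.unitSphere, W.isCompact_unitSphere, LinearMap.range W.innerOnUnitSphere,
    by rw [LinearMap.finrank_range_of_inj Submodule.innerOnUnitSphere_injective, hW], ?_⟩
  rintro _ ⟨a, rfl⟩ hf
  exact Submodule.existsUnique_isMax_innerOnUnitSphere fun ha => hf (by rw [ha, map_zero])

/-- For positive integers `n ≥ 2` and `m ≥ 1` with `m ≥ n`, there is a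
compact subset `K` of `ℝᵐ` and an `n`-dimensional linear subspace of `C(K, ℝ)` all
of whose nonzero elements attain their maximum at exactly one point of `K`. -/
theorem stmt_14 (n m : ℕ) (hn : 2 ≤ n) (hm : 1 ≤ m) (hmn : n ≤ m) :
    ∃ K : Set (EuclideanSpace ℝ (Fin m)), IsCompact K ∧
      ∃ V : Submodule ℝ C(K, ℝ), Module.finrank ℝ V = n ∧
        ∀ f ∈ V, f ≠ 0 → ∃! x₀ : K, ∀ x : K, f x ≤ f x₀ :=
  stmt_14_general n m hmn
end

section
/- Let a < b be real numbers. There is no 2-dimensional linear subspace V of C([a,b], ℝ) such that every nonzero f ∈ V attains its maximum at exactly one point of [a,b]. -/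
/-!
Take a basis `f, g` of `V` and the loop `F t = cos t • f + sin t • g` of nonzero elements of `V`.
The unique maximiser `x t` of `F t` depends continuously on `t`, since its graph is closed and
`[a, b]` is compact. As `F (t + π) = -F t`, the point `x (t + π)` is a minimiser of `F t`, so it
differs from `x t` (otherwise `F t` is constant and every point maximises it). But `x` is
`2π`-periodic, so `t ↦ x t - x (t + π)` changes sign between `0` and `π` and vanishes somewhere.
-/

open Function Set Real

theorem continuous_of_isClosed_graph_of_compactSpace {T X : Type*} [TopologicalSpace T]
    [TopologicalSpace X] [CompactSpace X] {x : T → X}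
    (hx : IsClosed {p : T × X | p.2 = x p.1}) : Continuous x := by
  refine continuous_iff_isClosed.2 fun C hC => ?_
  have hpreimage : x ⁻¹' C = Prod.fst '' ({p : T × X | p.2 = x p.1} ∩ univ ×ˢ C) := by
    ext t
    simp
  rw [hpreimage]
  exact isClosedMap_fst_of_compactSpace _ (hx.inter (isClosed_univ.prod hC))

theorem continuous_of_forall_le_iff_eq {T X β : Type*} [TopologicalSpace T] [TopologicalSpace X]
    [CompactSpace X] [Preorder β] [TopologicalSpace β] [OrderClosedTopology β]
    {Φ : T → X → β} (hΦ : Continuous (uncurry Φ)) {x : T → X}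
    (hx : ∀ t y, (∀ z, Φ t z ≤ Φ t y) ↔ y = x t) : Continuous x := by
  refine continuous_of_isClosed_graph_of_compactSpace ?_
  have hgraph : {p : T × X | p.2 = x p.1} = ⋂ z, {p | Φ p.1 z ≤ Φ p.1 p.2} := by
    ext p
    simp [hx]
  rw [hgraph]
  exact isClosed_iInter fun z => isClosed_le (hΦ.comp (continuous_fst.prodMk continuous_const)) hΦ

theorem Function.Antiperiodic.exists_eq_zero {G α : Type*} [Add G] [TopologicalSpace G]
    [PreconnectedSpace G] [Nonempty G] [AddCommGroup α] [LinearOrder α] [IsOrderedAddMonoid α]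
    [TopologicalSpace α] [OrderClosedTopology α] {f : G → α} {c : G} (hf : Continuous f)
    (h : Antiperiodic f c) : ∃ t, f t = 0 := by
  obtain ⟨x⟩ := ‹Nonempty G›
  rcases le_total (f x) 0 with hx | hx
  · exact intermediate_value_univ x (x + c) hf ⟨hx, h x ▸ neg_nonneg.2 hx⟩
  · exact intermediate_value_univ (x + c) x hf ⟨h x ▸ neg_nonpos.2 hx, hx⟩

theorem ne_of_forall_le_iff_eq_of_forall_ge {X β : Type*} [Nontrivial X] [Preorder β]
    {f : X → β} {x y : X} (hx : ∀ y', (∀ z, f z ≤ f y') ↔ y' = x) (hy : ∀ z, f y ≤ f z) :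
    x ≠ y := by
  rintro rfl
  obtain ⟨u, v, huv⟩ := exists_pair_ne X
  have hmax : ∀ w, w = x := fun w => (hx w).1 fun z => ((hx x).2 rfl z).trans (hy w)
  exact huv ((hmax u).trans (hmax v).symm)

theorem cos_smul_add_sin_smul_ne_zero {M : Type*} [AddCommGroup M] [Module ℝ M] {v : Fin 2 → M}
    (hv : LinearIndependent ℝ v) (t : ℝ) : cos t • v 0 + sin t • v 1 ≠ 0 := by
  intro h
  have hcoeff := Fintype.linearIndependent_iff.1 hv ![cos t, sin t] (by simpa [Fin.sum_univ_two])
  have hcos : cos t = 0 := hcoeff 0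
  have hsin : sin t = 0 := hcoeff 1
  simpa [hcos, hsin] using sin_sq_add_cos_sq t

theorem not_forall_existsUnique_max_of_antiperiodic {X β : Type*} [TopologicalSpace X]
    [CompactSpace X] [Nontrivial X] [AddCommGroup β] [PartialOrder β] [IsOrderedAddMonoid β]
    [TopologicalSpace β] [OrderClosedTopology β] {e : X → ℝ} (he : Continuous e)
    (he_inj : Injective e) {Φ : ℝ → X → β} (hΦ : Continuous (uncurry Φ)) {c : ℝ}
    (hanti : Antiperiodic Φ c) : ¬ ∀ t, ∃! y, ∀ z, Φ t z ≤ Φ t y := by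
  intro h
  choose x hx huniq using h
  have hx_iff : ∀ t y, (∀ z, Φ t z ≤ Φ t y) ↔ y = x t :=
    fun t y => ⟨huniq t y, by rintro rfl; exact hx t⟩
  have hx_cont : Continuous x := continuous_of_forall_le_iff_eq hΦ hx_iff
  have hx_per : Periodic x (2 * c) := fun t =>
    (hx_iff t _).1 (hanti.periodic_two_mul t ▸ hx (t + 2 * c))
  have hx_ne : ∀ t, x t ≠ x (t + c) := fun t =>
    ne_of_forall_le_iff_eq_of_forall_ge (hx_iff t) fun z => by
      simpa [hanti t] using hx (t + c) z
  obtain ⟨t, ht⟩ : ∃ t, e (x t) - e (x (t + c)) = 0 := by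
    refine Antiperiodic.exists_eq_zero (c := c) (by fun_prop) fun t => ?_
    rw [add_assoc, ← two_mul, hx_per t]
    ring
  exact hx_ne t (he_inj (sub_eq_zero.1 ht))

/-- For real numbers `a < b`, there is no 2-dimensional linear
subspace of `C([a,b], ℝ)` all of whose nonzero elements attain their maximum at
exactly one point of `[a,b]`. -/
theorem stmt_15 (a b : ℝ) (hab : a < b) :
    ¬ ∃ V : Submodule ℝ C(Set.Icc a b, ℝ), Module.finrank ℝ V = 2 ∧
      ∀ f ∈ V, f ≠ 0 → ∃! x₀ : Set.Icc a b, ∀ x : Set.Icc a b, f x ≤ f x₀ := by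
  rintro ⟨V, hdim, hmax⟩
  have : Nontrivial (Icc a b) := nontrivial_coe_sort.2
    ⟨a, left_mem_Icc.2 hab.le, b, right_mem_Icc.2 hab.le, hab.ne⟩
  obtain ⟨v, hv⟩ : ∃ v : Fin 2 → V, LinearIndependent ℝ v :=
    exists_linearIndependent_of_le_finrank hdim.ge
  let F : ℝ → V := fun t => cos t • v 0 + sin t • v 1
  have hF_cont : Continuous (uncurry fun t => ⇑(F t : C(Icc a b, ℝ))) :=
    continuous_eval.comp ((by fun_prop : Continuous fun t => (F t : C(Icc a b, ℝ))).prodMap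
      continuous_id)
  have hF_anti : Antiperiodic F π := fun t => by
    simp only [F, cos_add_pi, sin_add_pi]
    module
  exact not_forall_existsUnique_max_of_antiperiodic continuous_subtype_val Subtype.val_injective
    hF_cont (fun t => congrArg (fun f : V => ⇑(f : C(Icc a b, ℝ))) (hF_anti t))
    fun t => hmax _ (F t).2 (by simpa using cos_smul_add_sin_smul_ne_zero hv t)
end

section
/- Let K = {(aₙ/n)ₙ : (aₙ)ₙ ∈ ℓ², ‖(aₙ)ₙ‖₂ ≤ 1} ⊆ ℓ², and for each j ∈ ℕ let h_j : K → ℝ be the continuous function h_j(x) = j·πⱼ(x), where πⱼ is the projection onto the j-th coordinate. Then the functions h_j, j ∈ ℕ, are linearly independent, and every nontrivial finite linear combination f = Σ_{j=1}^{k} b_j h_j (with some b_j ≠ 0) attains its maximum at exactly one point of K. Consequently, the linear span of {h_j : j ∈ ℕ} is an infinite-dimensional linear subspace of C(K, ℝ) every nonzero element of which attains its maximum at exactly one point of K. -/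
/-!
`K` is the image of the closed unit ball of `ℓ²` under the injective diagonal operator
`D a = (aₙ / (n + 1))ₙ`, and the weights `j + 1` in `h j` undo `D`: for `x = D a` the combination
`∑ bⱼ hⱼ(x)` is the inner product `⟪a, b⟫`. A nonzero linear functional `⟪·, b⟫` attains its
maximum on the unit ball only at `b / ‖b‖` (equality in Cauchy–Schwarz), so the combination has a
unique maximum point on `K`. Linear independence follows: a vanishing nontrivial combination would
be maximal at every point of `K`, which has more than one point.
-/

open Metric Set Function
open scoped RealInnerProductSpace lp ENNReal

section InnerProductSpace

variable {E : Type*} [NormedAddCommGroup E] [InnerProductSpace ℝ E]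

theorem eq_inv_norm_smul_of_norm_le_one_of_norm_le_inner {a v : E} (hv : v ≠ 0)
    (ha : ‖a‖ ≤ 1) (hav : ‖v‖ ≤ ⟪a, v⟫) : a = ‖v‖⁻¹ • v := by
  have hv' : 0 < ‖v‖ := norm_pos_iff.mpr hv
  have hCS := real_inner_le_norm a v
  have hnorm : ‖a‖ = 1 := by nlinarith
  have heq : ‖v‖ • a = ‖a‖ • v :=
    inner_eq_norm_mul_iff_real.mp (le_antisymm hCS (by rwa [hnorm, one_mul]))
  rw [hnorm, one_smul] at heq
  calc a = ‖v‖⁻¹ • ‖v‖ • a := (inv_smul_smul₀ hv'.ne' a).symm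
    _ = ‖v‖⁻¹ • v := by rw [heq]

theorem existsUnique_forall_inner_le_of_mem_closedBall {v : E} (hv : v ≠ 0) :
    ∃! a, a ∈ closedBall (0 : E) 1 ∧ ∀ a' ∈ closedBall (0 : E) 1, ⟪a', v⟫ ≤ ⟪a, v⟫ := by
  have hv' : 0 < ‖v‖ := norm_pos_iff.mpr hv
  have hmem : ‖v‖⁻¹ • v ∈ closedBall (0 : E) 1 := by
    rw [mem_closedBall_zero_iff, norm_smul, norm_inv, norm_norm, inv_mul_cancel₀ hv'.ne']
  have hmax : ⟪‖v‖⁻¹ • v, v⟫ = ‖v‖ := by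
    rw [real_inner_smul_left, real_inner_self_eq_norm_sq]
    field_simp
  refine ⟨‖v‖⁻¹ • v, ⟨hmem, fun a' ha' => ?_⟩, fun a ⟨ha, hle⟩ => ?_⟩
  · calc ⟪a', v⟫ ≤ ‖a'‖ * ‖v‖ := real_inner_le_norm a' v
      _ ≤ ‖v‖ := mul_le_of_le_one_left hv'.le (mem_closedBall_zero_iff.mp ha')
      _ = _ := hmax.symm
  · exact eq_inv_norm_smul_of_norm_le_one_of_norm_le_inner hv (mem_closedBall_zero_iff.mp ha)
      (hmax ▸ hle _ hmem)

end InnerProductSpace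

theorem existsUnique_forall_le_image {α β γ : Type*} [LE γ] {f : α → β} {s : Set α} {φ : β → γ}
    (h : ∃! a, a ∈ s ∧ ∀ a' ∈ s, φ (f a') ≤ φ (f a)) :
    ∃! y : f '' s, ∀ y' : f '' s, φ y' ≤ φ y := by
  obtain ⟨a, ⟨ha, hmax⟩, huniq⟩ := h
  refine ⟨⟨f a, mem_image_of_mem f ha⟩, ?_, ?_⟩
  · rintro ⟨_, a', ha', rfl⟩
    exact hmax a' ha'
  · rintro ⟨_, a', ha', rfl⟩ hle
    exact Subtype.ext <| congrArg f <| huniq a' ⟨ha', fun a'' ha'' => hle ⟨_, a'', ha'', rfl⟩⟩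

theorem linearIndependent_of_existsUnique_forall_sum_le {ι X : Type*} [Nontrivial X]
    {h : ι → X → ℝ}
    (hmax : ∀ b : ι →₀ ℝ, b ≠ 0 → ∃! x₀ : X, ∀ x : X,
      ∑ j ∈ b.support, b j * h j x ≤ ∑ j ∈ b.support, b j * h j x₀) :
    LinearIndependent ℝ h := by
  rw [linearIndependent_iff]
  intro b hb
  by_contra hb0
  have hzero : ∀ x, ∑ j ∈ b.support, b j * h j x = 0 := fun x => by
    simpa [Finsupp.linearCombination_apply, Finsupp.sum] using congrFun hb x
  obtain ⟨x₀, -, huniq⟩ := hmax b hb0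
  obtain ⟨x, y, hxy⟩ := exists_pair_ne X
  exact hxy <| (huniq x fun _ => by simp only [hzero, le_refl]).trans
    (huniq y fun _ => by simp only [hzero, le_refl]).symm

namespace Finsupp

variable {ι E : Type*} [NormedAddCommGroup E]

def toLp (p : ℝ≥0∞) (b : ι →₀ E) : lp (fun _ : ι => E) p :=
  ⟨⇑b, (memℓp_zero b.hasFiniteSupport).of_exponent_ge zero_le⟩

@[simp]
theorem coe_toLp (p : ℝ≥0∞) (b : ι →₀ E) : ⇑(b.toLp p) = b := rfl

theorem toLp_ne_zero {p : ℝ≥0∞} {b : ι →₀ E} (hb : b ≠ 0) : b.toLp p ≠ 0 := fun h =>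
  hb <| Finsupp.ext fun i => congrFun (congrArg (⇑) h) i

theorem inner_toLp (a : ℓ²(ι, ℝ)) (b : ι →₀ ℝ) : ⟪a, b.toLp 2⟫ = ∑ j ∈ b.support, b j * a j := by
  rw [lp.inner_eq_tsum, tsum_eq_sum (s := b.support) fun j hj => by
    simp [notMem_support_iff.mp hj]]
  simp [mul_comm]

end Finsupp

noncomputable def diagInvSucc {p : ℝ≥0∞} (a : lp (fun _ : ℕ => ℝ) p) : lp (fun _ : ℕ => ℝ) p :=
  ⟨fun n => a n / (n + 1), (lp.memℓp a).mono' fun n => by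
    rw [norm_div, Real.norm_of_nonneg (by positivity : (0 : ℝ) ≤ n + 1)]
    exact div_le_self (norm_nonneg _) (by simp)⟩

@[simp]
theorem diagInvSucc_apply {p : ℝ≥0∞} (a : lp (fun _ : ℕ => ℝ) p) (n : ℕ) :
    diagInvSucc a n = a n / (n + 1) := rfl

theorem diagInvSucc_injective {p : ℝ≥0∞} : Injective (diagInvSucc (p := p)) := fun a a' h =>
  lp.ext <| funext fun n => by
    simpa [div_left_inj' (n.cast_add_one_ne_zero (R := ℝ))] using congrFun (congrArg (⇑) h) n

theorem sum_mul_succ_mul_diagInvSucc (a : ℓ²(ℕ, ℝ)) (b : ℕ →₀ ℝ) :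
    ∑ j ∈ b.support, b j * ((j + 1) * diagInvSucc a j) = ⟪a, b.toLp 2⟫ := by
  rw [Finsupp.inner_toLp]
  refine Finset.sum_congr rfl fun j _ => ?_
  rw [diagInvSucc_apply, mul_div_cancel₀ _ (j.cast_add_one_ne_zero)]

theorem setOf_eq_diagInvSucc_image_closedBall :
    {x : ℓ²(ℕ, ℝ) | ∃ a : ℓ²(ℕ, ℝ), ‖a‖ ≤ 1 ∧ ∀ n : ℕ, x n = a n / (n + 1)} =
      diagInvSucc '' closedBall 0 1 := by
  ext x
  simp only [mem_ofPred_eq, mem_image, mem_closedBall_zero_iff, lp.ext_iff, funext_iff,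
    diagInvSucc_apply, eq_comm]

theorem nontrivial_diagInvSucc_image_closedBall :
    (diagInvSucc '' closedBall (0 : ℓ²(ℕ, ℝ)) 1).Nontrivial := by
  refine Set.Nontrivial.image ⟨0, mem_closedBall_self zero_le_one, lp.single 2 0 1, ?_, ?_⟩
    diagInvSucc_injective
  · rw [mem_closedBall_zero_iff, lp.norm_single (by norm_num), norm_one]
  · intro h
    simpa using congrFun (congrArg (⇑) h) 0

theorem existsUnique_forall_sum_le_of_diagInvSucc_image {b : ℕ →₀ ℝ} (hb : b ≠ 0) :
    ∃! x₀ : diagInvSucc '' closedBall (0 : ℓ²(ℕ, ℝ)) 1,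
      ∀ x : diagInvSucc '' closedBall (0 : ℓ²(ℕ, ℝ)) 1,
        ∑ j ∈ b.support, b j * ((j + 1) * (x : ℓ²(ℕ, ℝ)) j) ≤
          ∑ j ∈ b.support, b j * ((j + 1) * (x₀ : ℓ²(ℕ, ℝ)) j) := by
  have hball := existsUnique_forall_inner_le_of_mem_closedBall (Finsupp.toLp_ne_zero (p := 2) hb)
  simp only [← sum_mul_succ_mul_diagInvSucc] at hball
  exact existsUnique_forall_le_image (f := diagInvSucc)
    (φ := fun x => ∑ j ∈ b.support, b j * ((j + 1) * x j)) hball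

/-- Let `K = {(aₙ/n)ₙ : (aₙ)ₙ ∈ ℓ², ‖(aₙ)ₙ‖₂ ≤ 1} ⊆ ℓ²` (sequences
indexed from `0`, so the `n`-th term is divided by `n + 1`) and for each `j` let
`h j : K → ℝ` be given by `h j x = (j+1) · πⱼ(x)`. Then each `h j` is continuous,
the family `(h j)` is linearly independent, and every nontrivial finite linear
combination of the `h j` attains its maximum at exactly one point of `K`; hence the
span of the `h j` is an infinite-dimensional subspace of `C(K, ℝ)` all of whose
nonzero elements attain their maximum at exactly one point of `K`. -/
theorem stmt_18
    (K : Set (lp (fun _ : ℕ => ℝ) 2))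
    (hK : K = {x : lp (fun _ : ℕ => ℝ) 2 | ∃ a : lp (fun _ : ℕ => ℝ) 2,
      ‖a‖ ≤ 1 ∧ ∀ n : ℕ, x n = a n / (n + 1)})
    (h : ℕ → (K → ℝ))
    (hh : ∀ (j : ℕ) (x : K), h j x = (j + 1 : ℝ) * (x : lp (fun _ : ℕ => ℝ) 2) j) :
    (∀ j : ℕ, Continuous (h j)) ∧ LinearIndependent ℝ h ∧
    ∀ b : ℕ →₀ ℝ, b ≠ 0 →
      ∃! x₀ : K, ∀ x : K,
        (∑ j ∈ b.support, b j * h j x) ≤ ∑ j ∈ b.support, b j * h j x₀ := by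
  obtain rfl : K = diagInvSucc '' closedBall 0 1 := hK.trans setOf_eq_diagInvSucc_image_closedBall
  have hmax : ∀ b : ℕ →₀ ℝ, b ≠ 0 → ∃! x₀ : diagInvSucc '' closedBall (0 : ℓ²(ℕ, ℝ)) 1,
      ∀ x, (∑ j ∈ b.support, b j * h j x) ≤ ∑ j ∈ b.support, b j * h j x₀ := fun b hb => by
    simpa only [hh] using existsUnique_forall_sum_le_of_diagInvSucc_image hb
  have : Nontrivial (diagInvSucc '' closedBall (0 : ℓ²(ℕ, ℝ)) 1) :=
    nontrivial_coe_sort.mpr nontrivial_diagInvSucc_image_closedBall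
  refine ⟨fun j => ?_, linearIndependent_of_existsUnique_forall_sum_le hmax, hmax⟩
  rw [funext (hh j)]
  exact continuous_const.mul
    ((lp.lipschitzWith_one_eval 2 j).continuous.comp continuous_subtype_val)
end

section
/- The set Ĉ[0,1] of all continuous functions f : [0,1] → ℝ that attain their maximum at exactly one point of [0,1] is a dense G_δ subset of the Banach space C([0,1], ℝ) equipped with the supremum norm: Ĉ[0,1] is a countable intersection of open subsets of C([0,1], ℝ), and it is dense in C([0,1], ℝ). -/
/-!
On a compact space a unique maximizer `x₀` of `f` is uniform: off each ball `ball x₀ r`, `f`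
stays some `δ > 0` below `f x₀`, since its maximum on the compact set `{x | r ≤ dist x x₀}` is
`< f x₀`. The slack `δ` makes this condition open in the sup norm, and since every maximizer of
such an `f` lies within `r` of `x₀`, imposing it for all `r = 1 / (n + 1)` forces the maximizer
to be unique. For density, subtracting the tent `c · min (dist x x₀) 1` at a maximizer `x₀` of
`f` moves `f` by at most `c` and makes `x₀` its only maximizer.
-/

open Set Metric

lemma IsCompact.exists_pos_add_le_of_forall_lt {X : Type*} [TopologicalSpace X] {K : Set X}
    (hK : IsCompact K) {f : X → ℝ} (hf : Continuous f) {c : ℝ} (hlt : ∀ x ∈ K, f x < c) :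
    ∃ δ > 0, ∀ x ∈ K, f x + δ ≤ c := by
  rcases K.eq_empty_or_nonempty with rfl | hne
  · exact ⟨1, one_pos, by simp⟩
  obtain ⟨y, hy, hymax⟩ := hK.exists_isMaxOn hne hf.continuousOn
  exact ⟨c - f y, sub_pos.mpr (hlt y hy), fun x hx => by linarith [isMaxOn_iff.mp hymax x hx]⟩

lemma dist_lt_of_forall_add_le_off_ball {X : Type*} [PseudoMetricSpace X] {f : X → ℝ}
    {r δ : ℝ} {x₀ m : X} (hδ : 0 < δ) (hf : ∀ x, r ≤ dist x x₀ → f x + δ ≤ f x₀)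
    (hm : ∀ x, f x ≤ f m) : dist m x₀ < r := by
  by_contra! h
  linarith [hf m h, hm x₀]

namespace ContinuousMap

variable {X : Type*} [MetricSpace X] [CompactSpace X]

def uniqueMaxSet (X : Type*) [TopologicalSpace X] : Set C(X, ℝ) :=
  {f | ∃! x₀ : X, ∀ x, f x ≤ f x₀}

def uniformMaxOffBall (r : ℝ) : Set C(X, ℝ) :=
  {f | ∃ x₀ : X, ∃ δ > 0, ∀ x, r ≤ dist x x₀ → f x + δ ≤ f x₀}

lemma isOpen_uniformMaxOffBall (r : ℝ) : IsOpen (uniformMaxOffBall (X := X) r) := by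
  rw [Metric.isOpen_iff]
  rintro f ⟨x₀, δ, hδ, hf⟩
  refine ⟨δ / 3, by positivity, fun g hg => ⟨x₀, δ / 3, by positivity, fun x hx => ?_⟩⟩
  have hgx := abs_sub_lt_iff.mp ((dist_apply_le_dist x).trans_lt (mem_ball.mp hg))
  have hgx₀ := abs_sub_lt_iff.mp ((dist_apply_le_dist x₀).trans_lt (mem_ball.mp hg))
  linarith [hf x hx, hgx.1, hgx₀.2]

lemma uniqueMaxSet_subset_uniformMaxOffBall {r : ℝ} (hr : 0 < r) :
    uniqueMaxSet X ⊆ uniformMaxOffBall r := by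
  rintro f ⟨x₀, hmax, huniq⟩
  have hlt : ∀ x ∈ {x | r ≤ dist x x₀}, f x < f x₀ := fun x (hx : r ≤ dist x x₀) =>
    (hmax x).lt_of_ne fun hEq => by
      rw [huniq x fun y => hEq ▸ hmax y, dist_self] at hx
      linarith
  have hK : IsClosed {x : X | r ≤ dist x x₀} := isClosed_le continuous_const (by fun_prop)
  obtain ⟨δ, hδ, hf⟩ := hK.isCompact.exists_pos_add_le_of_forall_lt f.continuous hlt
  exact ⟨x₀, δ, hδ, hf⟩

lemma uniqueMaxSet_eq_iInter [Nonempty X] :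
    uniqueMaxSet X = ⋂ n : ℕ, uniformMaxOffBall (1 / ((n : ℝ) + 1)) := by
  refine (subset_iInter fun n => uniqueMaxSet_subset_uniformMaxOffBall (by positivity)).antisymm ?_
  intro f hf
  rw [mem_iInter] at hf
  obtain ⟨m, hm⟩ := f.continuous.exists_forall_ge (by simp)
  refine ⟨m, hm, fun m' hm' => eq_of_forall_dist_le fun ε hε => ?_⟩
  obtain ⟨n, hn⟩ := exists_nat_one_div_lt (half_pos hε)
  obtain ⟨x₀, δ, hδ, hfx₀⟩ := hf n
  calc dist m' m ≤ dist m' x₀ + dist m x₀ := dist_triangle_right _ _ _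
    _ ≤ ε := by
      linarith [dist_lt_of_forall_add_le_off_ball hδ hfx₀ hm,
        dist_lt_of_forall_add_le_off_ball hδ hfx₀ hm']

lemma isGδ_uniqueMaxSet [Nonempty X] : IsGδ (uniqueMaxSet X) := by
  rw [uniqueMaxSet_eq_iInter]
  exact .iInter fun n => (isOpen_uniformMaxOffBall _).isGδ

lemma exists_mem_uniqueMaxSet_dist_le {f : C(X, ℝ)} {x₀ : X} (hx₀ : ∀ x, f x ≤ f x₀) {c : ℝ}
    (hc : 0 < c) : ∃ g ∈ uniqueMaxSet X, dist g f ≤ c := by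
  let tent : C(X, ℝ) := ⟨fun x => min (dist x x₀) 1, by fun_prop⟩
  have htent : ∀ x, 0 ≤ tent x ∧ tent x ≤ 1 := fun x =>
    ⟨le_min dist_nonneg zero_le_one, min_le_right _ _⟩
  have htent_pos : ∀ x, x ≠ x₀ → 0 < tent x := fun x hx => lt_min (dist_pos.mpr hx) one_pos
  have htent₀ : tent x₀ = 0 := by simp [tent]
  refine ⟨f - c • tent, ⟨x₀, fun x => ?_, fun y hy => ?_⟩, ?_⟩
  · simp only [coe_sub, coe_smul, Pi.sub_apply, Pi.smul_apply, smul_eq_mul, htent₀]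
    nlinarith [hx₀ x, htent x]
  · by_contra hne
    have := hy x₀
    simp only [coe_sub, coe_smul, Pi.sub_apply, Pi.smul_apply, smul_eq_mul, htent₀] at this
    nlinarith [hx₀ y, htent_pos y hne]
  · refine (dist_le hc.le).mpr fun x => ?_
    simp only [coe_sub, coe_smul, Pi.sub_apply, Pi.smul_apply, smul_eq_mul, Real.dist_eq,
      sub_sub_cancel_left, abs_neg, abs_mul, abs_of_pos hc, abs_of_nonneg (htent x).1]
    nlinarith [htent x]

lemma dense_uniqueMaxSet [Nonempty X] : Dense (uniqueMaxSet X) := by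
  refine Metric.dense_iff.mpr fun f ε hε => ?_
  obtain ⟨x₀, hx₀⟩ := f.continuous.exists_forall_ge (by simp)
  obtain ⟨g, hg, hgf⟩ := exists_mem_uniqueMaxSet_dist_le hx₀ (half_pos hε)
  exact ⟨g, mem_ball.mpr (hgf.trans_lt (half_lt_self hε)), hg⟩

end ContinuousMap

/-- Gurariy: The set `Ĉ[0,1]` of continuous functions on `[0,1]`
attaining their maximum at exactly one point is a dense `G_δ` subset of the Banach
space `C([0,1], ℝ)` with the supremum norm (whose topology is the compact-open
topology carried by `C([0,1], ℝ)` in Mathlib). -/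
theorem stmt_19 :
    IsGδ {f : C(Set.Icc (0:ℝ) 1, ℝ) | ∃! x₀ : Set.Icc (0:ℝ) 1,
        ∀ x : Set.Icc (0:ℝ) 1, f x ≤ f x₀} ∧
    Dense {f : C(Set.Icc (0:ℝ) 1, ℝ) | ∃! x₀ : Set.Icc (0:ℝ) 1,
        ∀ x : Set.Icc (0:ℝ) 1, f x ≤ f x₀} :=
  ⟨ContinuousMap.isGδ_uniqueMaxSet, ContinuousMap.dense_uniqueMaxSet⟩
end
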